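/- arXiv:1109.0820 — 5 statements merged into one kernel-verified Lean document; each statement's English description precedes it below -/
import Mathlib

section
/- Let k ≥ 2, d ≥ 1, and let S = ((x_1,y_1),…,(x_m,y_m)) be a training set with each x_i ∈ ℝ^d, ‖x_i‖_∞ ≤ 1, and y_i ∈ {1,…,k}. Let (F_t, W_t, j_t) be a ShareBoost sequence for the training loss L. Then for every ε > 0 and every matrix W★ ∈ ℝ^{k×d}, after T = ⌈4‖W★‖²_{∞,1}/ε⌉ iterations the matrix W_T satisfies ‖W_T‖_{∞,0} ≤ T and L(W_T) ≤ L(W★) + ε. -/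
open scoped BigOperators

noncomputable section

/-- The multiclass logistic loss for label `y`. -/
def mcLoss (k : ℕ) (y : Fin k) (v : Fin k → ℝ) : ℝ :=
  Real.log (∑ y' : Fin k, Real.exp ((if y' ≠ y then (1 : ℝ) else 0) - v y + v y'))

/-- The average training loss of the matrix `W` (viewed as `Fin k → Fin d → ℝ`). -/
def trainLoss (k d m : ℕ) (x : Fin m → Fin d → ℝ) (y : Fin m → Fin k)
    (W : Fin k → Fin d → ℝ) : ℝ :=
  (1 / (m : ℝ)) * ∑ i : Fin m, mcLoss k (y i) (fun q => ∑ j : Fin d, W q j * x i j)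

/-- The `r`-th column of the gradient matrix of `L` at `W`. -/
def gradCol (k d : ℕ) (L : (Fin k → Fin d → ℝ) → ℝ) (W : Fin k → Fin d → ℝ)
    (r : Fin d) : Fin k → ℝ :=
  fun q => fderiv ℝ L W (fun q' j' => if q' = q ∧ j' = r then (1 : ℝ) else 0)

/-- A ShareBoost sequence for the training loss determined by the sample `(x, y)`. -/
structure ShareBoostSeq (k d m : ℕ) (x : Fin m → Fin d → ℝ) (y : Fin m → Fin k)
    (F : ℕ → Finset (Fin d)) (W : ℕ → Fin k → Fin d → ℝ) (jj : ℕ → Fin d) : Prop where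
  F_zero : F 0 = ∅
  W_supp : ∀ t, ∀ i ∉ F t, ∀ q, W t q i = 0
  W_min : ∀ t, ∀ V : Fin k → Fin d → ℝ, (∀ i ∉ F t, ∀ q, V q i = 0) →
    trainLoss k d m x y (W t) ≤ trainLoss k d m x y V
  j_max : ∀ t, ∀ r : Fin d,
    ∑ q : Fin k, |gradCol k d (trainLoss k d m x y) (W t) r q| ≤
      ∑ q : Fin k, |gradCol k d (trainLoss k d m x y) (W t) (jj t) q|
  F_succ : ∀ t, F (t + 1) = insert (jj t) (F t)

/-!
Each sample loss is a log-sum-exp minus a linear function of `W`. Along a line `η ↦ W + η V` it is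
therefore convex, and its second derivative is the variance of `V xᵢ` under a softmax
distribution, hence at most `1` when `‖V xᵢ‖_∞ ≤ 1`.

Since `W_t` minimizes `L` on matrices supported in `F_t`, the derivative of `L` at `W_t` vanishes
in the direction `W_t`, so convexity gives `L(W_t) - L(W★) ≤ ‖W★‖_{∞,1} G_t`, where `G_t` is the
largest `ℓ₁` norm of a gradient column. Moving by `G_t` against the signs of column `j_t` is
allowed at time `t + 1` and, by the smoothness bound, lowers the loss by at least `G_t² / 2`.
The gaps `e_t` thus satisfy `e_t² ≤ 2 ‖W★‖²_{∞,1} (e_t - e_{t+1})`, whence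
`t e_t ≤ 2 ‖W★‖²_{∞,1}`, which is at most `ε t / 2` once `t ≥ 4 ‖W★‖²_{∞,1} / ε`.
-/

open Finset Real

theorem add_mul_sub_le_of_hasDerivAt_of_monotone {f f' : ℝ → ℝ}
    (hf : ∀ x, HasDerivAt f (f' x) x) (hf' : Monotone f') {x y : ℝ} (hxy : x ≤ y) :
    f x + f' x * (y - x) ≤ f y := by
  rcases hxy.eq_or_lt with rfl | hlt
  · simp
  obtain ⟨ξ, hξ, hslope⟩ := exists_hasDerivAt_eq_slope f f' hlt
    (fun z _ => (hf z).continuousAt.continuousWithinAt) (fun z _ => hf z)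
  have h := mul_le_mul_of_nonneg_right (hf' hξ.1.le) (sub_nonneg.2 hxy)
  rw [hslope, div_mul_cancel₀ _ (sub_ne_zero.2 hlt.ne')] at h
  linarith

section LogSumExp

variable {ι : Type*}

lemma hasDerivAt_exp_add_mul (a b : ι → ℝ) (j : ι) (η : ℝ) :
    HasDerivAt (fun η => exp (a j + η * b j)) (b j * exp (a j + η * b j)) η := by
  simpa [mul_comm] using (((hasDerivAt_id η).mul_const (b j)).const_add (a j)).exp

variable [Fintype ι] (a b : ι → ℝ)

def lseLine (η : ℝ) : ℝ := log (∑ j, exp (a j + η * b j))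

def softmaxMean (η : ℝ) : ℝ :=
  (∑ j, b j * exp (a j + η * b j)) / ∑ j, exp (a j + η * b j)

variable [Nonempty ι]

lemma hasDerivAt_lseLine (η : ℝ) : HasDerivAt (lseLine a b) (softmaxMean a b η) η :=
  (HasDerivAt.fun_sum fun j _ => hasDerivAt_exp_add_mul a b j η).log (by positivity)

lemma hasDerivAt_softmaxMean (η : ℝ) :
    HasDerivAt (softmaxMean a b)
      (((∑ j, b j ^ 2 * exp (a j + η * b j)) * ∑ j, exp (a j + η * b j)
          - (∑ j, b j * exp (a j + η * b j)) ^ 2) / (∑ j, exp (a j + η * b j)) ^ 2) η := by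
  have hN : HasDerivAt (fun η => ∑ j, b j * exp (a j + η * b j))
      (∑ j, b j ^ 2 * exp (a j + η * b j)) η :=
    (HasDerivAt.fun_sum fun j _ => (hasDerivAt_exp_add_mul a b j η).const_mul (b j)).congr_deriv
      (sum_congr rfl fun j _ => by ring)
  exact (hN.div (HasDerivAt.fun_sum fun j _ => hasDerivAt_exp_add_mul a b j η)
    (by positivity)).congr_deriv (by ring)

lemma monotone_softmaxMean : Monotone (softmaxMean a b) := by
  refine monotone_of_hasDerivAt_nonneg (hasDerivAt_softmaxMean a b) fun η => ?_
  have hcs : (∑ j, b j * exp (a j + η * b j)) ^ 2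
      ≤ (∑ j, b j ^ 2 * exp (a j + η * b j)) * ∑ j, exp (a j + η * b j) :=
    sum_sq_le_sum_mul_sum_of_sq_le_mul _ (fun j _ => by positivity) (fun j _ => by positivity)
      fun j _ => le_of_eq (by ring)
  exact div_nonneg (sub_nonneg.2 hcs) (sq_nonneg _)

lemma monotone_id_sub_softmaxMean (hb : ∀ j, |b j| ≤ 1) :
    Monotone fun η => η - softmaxMean a b η := by
  refine monotone_of_hasDerivAt_nonneg
    (fun η => (hasDerivAt_id η).sub (hasDerivAt_softmaxMean a b η)) fun η => ?_
  have hS : 0 < ∑ j, exp (a j + η * b j) := by positivity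
  have hQ : ∑ j, b j ^ 2 * exp (a j + η * b j) ≤ ∑ j, exp (a j + η * b j) :=
    sum_le_sum fun j _ =>
      mul_le_of_le_one_left (by positivity) ((sq_le_one_iff_abs_le_one _).2 (hb j))
  have : ((∑ j, b j ^ 2 * exp (a j + η * b j)) * ∑ j, exp (a j + η * b j)
      - (∑ j, b j * exp (a j + η * b j)) ^ 2) / (∑ j, exp (a j + η * b j)) ^ 2 ≤ 1 := by
    rw [div_le_one (by positivity)]
    nlinarith [sq_nonneg (∑ j, b j * exp (a j + η * b j))]
  simpa using this

lemma lseLine_add_softmaxMean_le : lseLine a b 0 + softmaxMean a b 0 ≤ lseLine a b 1 := by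
  simpa using add_mul_sub_le_of_hasDerivAt_of_monotone (hasDerivAt_lseLine a b)
    (monotone_softmaxMean a b) zero_le_one

lemma lseLine_le_quadratic (hb : ∀ j, |b j| ≤ 1) {η : ℝ} (hη : 0 ≤ η) :
    lseLine a b η ≤ lseLine a b 0 + softmaxMean a b 0 * η + η ^ 2 / 2 := by
  have h := add_mul_sub_le_of_hasDerivAt_of_monotone (f := fun s => s ^ 2 / 2 - lseLine a b s)
    (fun s => by simpa using ((hasDerivAt_pow 2 s).div_const 2).fun_sub (hasDerivAt_lseLine a b s))
    (monotone_id_sub_softmaxMean a b hb) hη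
  norm_num at h
  linarith

end LogSumExp

section MulticlassLoss

variable {k : ℕ} [NeZero k] (y : Fin k) (a u : Fin k → ℝ)

lemma mcLoss_add_smul (η : ℝ) :
    mcLoss k y (a + η • u) =
      lseLine (fun q => (if q ≠ y then 1 else 0) + a q) u η - (a y + η * u y) := by
  have hsplit : ∀ q,
      exp ((if q ≠ y then (1 : ℝ) else 0) - (a + η • u) y + (a + η • u) q) =
        exp ((if q ≠ y then 1 else 0) + a q + η * u q) * exp (-(a y + η * u y)) := by
    intro q
    rw [← exp_add]
    simp only [Pi.add_apply, Pi.smul_apply, smul_eq_mul]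
    ring_nf
  rw [mcLoss, lseLine, sum_congr rfl fun q _ => hsplit q, ← sum_mul,
    log_mul (by positivity) (exp_pos _).ne', log_exp]
  ring

def mcLossSlope : ℝ :=
  softmaxMean (fun q => (if q ≠ y then 1 else 0) + a q) u 0 - u y

lemma hasDerivAt_mcLoss_add_smul :
    HasDerivAt (fun η : ℝ => mcLoss k y (a + η • u)) (mcLossSlope y a u) 0 := by
  simp only [mcLoss_add_smul]
  exact (hasDerivAt_lseLine _ u 0).sub (((hasDerivAt_id 0).mul_const (u y)).const_add (a y))
    |>.congr_deriv (by simp [mcLossSlope])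

lemma mcLoss_add_mcLossSlope_le : mcLoss k y a + mcLossSlope y a u ≤ mcLoss k y (a + u) := by
  have h0 := mcLoss_add_smul y a u 0
  have h1 := mcLoss_add_smul y a u 1
  simp only [zero_smul, add_zero, one_smul, zero_mul, one_mul] at h0 h1
  rw [h0, h1, mcLossSlope]
  linarith [lseLine_add_softmaxMean_le (fun q => (if q ≠ y then 1 else 0) + a q) u]

lemma mcLoss_add_smul_le (hu : ∀ q, |u q| ≤ 1) {η : ℝ} (hη : 0 ≤ η) :
    mcLoss k y (a + η • u) ≤ mcLoss k y a + mcLossSlope y a u * η + η ^ 2 / 2 := by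
  have h0 := mcLoss_add_smul y a u 0
  simp only [zero_smul, add_zero, zero_mul] at h0
  rw [mcLoss_add_smul, h0, mcLossSlope]
  linarith [lseLine_le_quadratic (fun q => (if q ≠ y then 1 else 0) + a q) u hu hη]

end MulticlassLoss

section TrainingLoss

open Matrix

variable {k d m : ℕ} (x : Fin m → Fin d → ℝ) (y : Fin m → Fin k)

lemma trainLoss_eq_sum_mulVec (W : Fin k → Fin d → ℝ) :
    trainLoss k d m x y W = 1 / (m : ℝ) * ∑ i, mcLoss k (y i) (W *ᵥ x i) := rfl

lemma add_smul_mulVec (W V : Fin k → Fin d → ℝ) (v : Fin d → ℝ) (η : ℝ) :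
    (W + η • V) *ᵥ v = W *ᵥ v + η • V *ᵥ v := by
  ext q
  simp [mulVec, dotProduct, add_mul, sum_add_distrib, mul_sum, mul_assoc]

variable [NeZero k]

lemma differentiable_trainLoss : Differentiable ℝ (trainLoss k d m x y) := by
  unfold trainLoss mcLoss
  fun_prop (disch := (intro; positivity))

lemma fderiv_trainLoss_apply (W V : Fin k → Fin d → ℝ) :
    fderiv ℝ (trainLoss k d m x y) W V =
      1 / (m : ℝ) * ∑ i, mcLossSlope (y i) (W *ᵥ x i) (V *ᵥ x i) := by
  have hline : HasDerivAt (fun η : ℝ => trainLoss k d m x y (W + η • V))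
      (1 / (m : ℝ) * ∑ i, mcLossSlope (y i) (W *ᵥ x i) (V *ᵥ x i)) 0 := by
    simp only [trainLoss_eq_sum_mulVec, add_smul_mulVec]
    exact (HasDerivAt.fun_sum fun i _ => hasDerivAt_mcLoss_add_smul _ _ _).const_mul _
  exact ((differentiable_trainLoss x y W).hasFDerivAt.hasLineDerivAt V).unique hline

lemma trainLoss_add_fderiv_le (W V : Fin k → Fin d → ℝ) :
    trainLoss k d m x y W + fderiv ℝ (trainLoss k d m x y) W V ≤
      trainLoss k d m x y (W + V) := by
  rw [fderiv_trainLoss_apply, trainLoss_eq_sum_mulVec, trainLoss_eq_sum_mulVec, ← mul_add,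
    ← sum_add_distrib]
  gcongr with i
  have hsum : (W + V) *ᵥ x i = W *ᵥ x i + V *ᵥ x i := by
    simpa using add_smul_mulVec W V (x i) 1
  rw [hsum]
  exact mcLoss_add_mcLossSlope_le (y i) (W *ᵥ x i) (V *ᵥ x i)

lemma trainLoss_add_smul_le (W V : Fin k → Fin d → ℝ) (hV : ∀ i q, |(V *ᵥ x i) q| ≤ 1)
    {η : ℝ} (hη : 0 ≤ η) :
    trainLoss k d m x y (W + η • V) ≤
      trainLoss k d m x y W + fderiv ℝ (trainLoss k d m x y) W V * η + η ^ 2 / 2 := by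
  rw [fderiv_trainLoss_apply, trainLoss_eq_sum_mulVec, trainLoss_eq_sum_mulVec]
  calc 1 / (m : ℝ) * ∑ i, mcLoss k (y i) ((W + η • V) *ᵥ x i)
      ≤ 1 / (m : ℝ) * ∑ i, (mcLoss k (y i) (W *ᵥ x i)
          + mcLossSlope (y i) (W *ᵥ x i) (V *ᵥ x i) * η + η ^ 2 / 2) := by
        gcongr with i
        rw [add_smul_mulVec]
        exact mcLoss_add_smul_le _ _ _ (hV i) hη
    _ = 1 / (m : ℝ) * ∑ i, mcLoss k (y i) (W *ᵥ x i)
          + 1 / (m : ℝ) * (∑ i, mcLossSlope (y i) (W *ᵥ x i) (V *ᵥ x i)) * η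
          + (m : ℝ) / m * (η ^ 2 / 2) := by
        simp only [sum_add_distrib, ← sum_mul, sum_const, card_univ, Fintype.card_fin,
          nsmul_eq_mul]
        ring
    _ ≤ _ := by
        gcongr
        exact mul_le_of_le_one_left (by positivity) (div_self_le_one (m : ℝ))

end TrainingLoss

lemma fderiv_apply_eq_zero_of_forall_le {E : Type*} [NormedAddCommGroup E] [NormedSpace ℝ E]
    {f : E → ℝ} {w v : E} (hf : DifferentiableAt ℝ f w)
    (hmin : ∀ s : ℝ, f w ≤ f (w + s • v)) :
    fderiv ℝ f w v = 0 :=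
  IsLocalMin.hasDerivAt_eq_zero (Filter.Eventually.of_forall fun s => by simpa using hmin s)
    (hf.hasFDerivAt.hasLineDerivAt v)

lemma fderiv_apply_eq_sum_gradCol {k d : ℕ} (L : (Fin k → Fin d → ℝ) → ℝ)
    (W V : Fin k → Fin d → ℝ) :
    fderiv ℝ L W V = ∑ q, ∑ r, V q r * gradCol k d L W r q := by
  have hV :
      V = ∑ q, ∑ r, V q r • fun q' r' => if q' = q ∧ r' = r then (1 : ℝ) else 0 := by
    ext q' r'
    simp [Finset.sum_apply, ite_and]
  conv_lhs => rw [hV]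
  simp only [map_sum, map_smul, smul_eq_mul, gradCol]

lemma abs_sum_sum_mul_le {κ ι : Type*} [Fintype κ] [Fintype ι] (V : κ → ι → ℝ)
    (g : ι → κ → ℝ) {G : ℝ} (hg : ∀ r, ∑ q, |g r q| ≤ G) :
    |∑ q, ∑ r, V q r * g r q| ≤ (∑ r, ‖fun q => V q r‖) * G := by
  rw [sum_comm, sum_mul]
  refine (abs_sum_le_sum_abs _ _).trans (sum_le_sum fun r _ => ?_)
  calc |∑ q, V q r * g r q| ≤ ∑ q, ‖fun q => V q r‖ * |g r q| :=
        (abs_sum_le_sum_abs _ _).trans (sum_le_sum fun q _ => by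
          rw [abs_mul]
          exact mul_le_mul_of_nonneg_right (norm_le_pi_norm (fun q => V q r) q) (abs_nonneg _))
    _ ≤ ‖fun q => V q r‖ * G := by
        rw [← mul_sum]
        exact mul_le_mul_of_nonneg_left (hg r) (norm_nonneg _)

lemma nat_mul_le_of_sq_le_mul_sub {e : ℕ → ℝ} {C : ℝ} (hC : 0 ≤ C)
    (hanti : ∀ t, e (t + 1) ≤ e t)
    (hsq : ∀ t, 0 ≤ e t → e t ^ 2 ≤ C * (e t - e (t + 1))) (t : ℕ) :
    t * e t ≤ C := by
  induction t with
  | zero => simpa using hC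
  | succ t ih =>
    have hnext := hanti t
    push_cast
    rcases lt_or_ge (e t) 0 with hneg | hpos
    · nlinarith
    rcases le_or_gt (e (t + 1)) 0 with hnext_nonpos | hnext_pos
    · nlinarith
    have h := hsq t hpos
    -- `C² - (t + 1) C e + (t + 1) e² = (C - t e) (C - e) + e²`
    nlinarith [mul_nonneg (sub_nonneg.2 ih) hpos]

lemma le_of_le_mul_of_le_sub_sq {e G : ℕ → ℝ} {B ε : ℝ} (hB : 0 ≤ B) (hε : 0 < ε)
    (hgap : ∀ t, e t ≤ B * G t) (hdesc : ∀ t, e (t + 1) ≤ e t - G t ^ 2 / 2)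
    {T : ℕ} (hT : 4 * B ^ 2 ≤ T * ε) : e T ≤ ε := by
  have hsq : ∀ t, 0 ≤ e t → e t ^ 2 ≤ 2 * B ^ 2 * (e t - e (t + 1)) := fun t he => by
    nlinarith [pow_le_pow_left₀ he (hgap t) 2, hdesc t]
  have hrate := nat_mul_le_of_sq_le_mul_sub (by positivity)
    (fun t => by nlinarith [hdesc t, sq_nonneg (G t)]) hsq T
  by_contra! hlt
  have hBpos : 0 < B := by
    rcases hB.lt_or_eq with hpos | rfl
    · exact hpos
    · linarith [hgap T, zero_mul (G T)]
  nlinarith [mul_le_mul_of_nonneg_right hT (hε.trans hlt).le]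

namespace ShareBoostSeq

open Matrix

variable {k d m : ℕ} {x : Fin m → Fin d → ℝ} {y : Fin m → Fin k}
  {F : ℕ → Finset (Fin d)} {W : ℕ → Fin k → Fin d → ℝ} {jj : ℕ → Fin d}

lemma card_le (hSB : ShareBoostSeq k d m x y F W jj) (t : ℕ) : (F t).card ≤ t := by
  induction t with
  | zero => simp [hSB.F_zero]
  | succ t ih => rw [hSB.F_succ]; exact (card_insert_le _ _).trans (by omega)

lemma ncard_nonzero_columns_le (hSB : ShareBoostSeq k d m x y F W jj) (t : ℕ) :
    {r : Fin d | ∃ q, W t q r ≠ 0}.ncard ≤ t := by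
  have hsub : {r : Fin d | ∃ q, W t q r ≠ 0} ⊆ F t := by
    rintro r ⟨q, hq⟩
    by_contra hr
    exact hq (hSB.W_supp t r hr q)
  calc {r : Fin d | ∃ q, W t q r ≠ 0}.ncard ≤ (F t : Set (Fin d)).ncard :=
        Set.ncard_le_ncard hsub (F t).finite_toSet
    _ = (F t).card := Set.ncard_coe_finset _
    _ ≤ t := hSB.card_le t

variable [NeZero k]

lemma fderiv_self_eq_zero (hSB : ShareBoostSeq k d m x y F W jj) (t : ℕ) :
    fderiv ℝ (trainLoss k d m x y) (W t) (W t) = 0 :=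
  fderiv_apply_eq_zero_of_forall_le (differentiable_trainLoss x y _) fun s =>
    hSB.W_min t _ fun i hi q => by simp [hSB.W_supp t i hi q]

lemma loss_sub_le (hSB : ShareBoostSeq k d m x y F W jj) (Wstar : Fin k → Fin d → ℝ)
    (t : ℕ) :
    trainLoss k d m x y (W t) - trainLoss k d m x y Wstar ≤
      (∑ r, ‖fun q => Wstar q r‖) *
        ∑ q, |gradCol k d (trainLoss k d m x y) (W t) (jj t) q| := by
  have hconv := trainLoss_add_fderiv_le x y (W t) (Wstar - W t)
  rw [add_sub_cancel, map_sub, hSB.fderiv_self_eq_zero, sub_zero,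
    fderiv_apply_eq_sum_gradCol] at hconv
  have := abs_sum_sum_mul_le Wstar _ (hSB.j_max t)
  linarith [neg_abs_le (∑ q, ∑ r, Wstar q r * gradCol k d (trainLoss k d m x y) (W t) r q)]

lemma loss_succ_le (hSB : ShareBoostSeq k d m x y F W jj) (hx : ∀ i, ‖x i‖ ≤ 1) (t : ℕ) :
    trainLoss k d m x y (W (t + 1)) ≤ trainLoss k d m x y (W t) -
      (∑ q, |gradCol k d (trainLoss k d m x y) (W t) (jj t) q|) ^ 2 / 2 := by
  set g := gradCol k d (trainLoss k d m x y) (W t) (jj t)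
  set G := ∑ q, |g q|
  let E : Fin k → Fin d → ℝ := fun q r => if r = jj t then -(SignType.sign (g q) : ℝ) else 0
  have hE_slope : fderiv ℝ (trainLoss k d m x y) (W t) E = -G := by
    simp [fderiv_apply_eq_sum_gradCol, E, G, g, sign_mul_self]
  have hE_bdd : ∀ i q, |(E *ᵥ x i) q| ≤ 1 := by
    intro i q
    have hsign : |(SignType.sign (g q) : ℝ)| ≤ 1 := by
      rcases SignType.sign (g q) with _ | _ | _ <;> simp
    have hxi : |x i (jj t)| ≤ 1 := (norm_le_pi_norm (x i) (jj t)).trans (hx i)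
    simpa [E, mulVec, dotProduct, abs_mul] using mul_le_one₀ hsign (abs_nonneg _) hxi
  have hE_supp : ∀ i ∉ F (t + 1), ∀ q, (W t + G • E) q i = 0 := by
    intro i hi q
    rw [hSB.F_succ, mem_insert, not_or] at hi
    simp [E, hSB.W_supp t i hi.2 q, hi.1]
  calc trainLoss k d m x y (W (t + 1)) ≤ trainLoss k d m x y (W t + G • E) :=
        hSB.W_min (t + 1) _ hE_supp
    _ ≤ trainLoss k d m x y (W t) + fderiv ℝ (trainLoss k d m x y) (W t) E * G + G ^ 2 / 2 :=
        trainLoss_add_smul_le x y _ _ hE_bdd (sum_nonneg fun q _ => abs_nonneg _)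
    _ = trainLoss k d m x y (W t) - G ^ 2 / 2 := by rw [hE_slope]; ring

end ShareBoostSeq

theorem shareBoost_sparsity_guarantee_general
    (k d m : ℕ) (hk : 2 ≤ k)
    (x : Fin m → Fin d → ℝ) (y : Fin m → Fin k)
    (hx : ∀ i : Fin m, ‖x i‖ ≤ 1)
    (F : ℕ → Finset (Fin d)) (W : ℕ → Fin k → Fin d → ℝ) (jj : ℕ → Fin d)
    (hSB : ShareBoostSeq k d m x y F W jj)
    (ε : ℝ) (hε : 0 < ε)
    (Wstar : Fin k → Fin d → ℝ)
    (T : ℕ) (hT : T = ⌈4 * (∑ r : Fin d, ‖fun q => Wstar q r‖) ^ 2 / ε⌉₊) :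
    {r : Fin d | ∃ q, W T q r ≠ 0}.ncard ≤ T ∧
      trainLoss k d m x y (W T) ≤ trainLoss k d m x y Wstar + ε := by
  have : NeZero k := ⟨by omega⟩
  refine ⟨hSB.ncard_nonzero_columns_le T, ?_⟩
  have hTε : 4 * (∑ r : Fin d, ‖fun q => Wstar q r‖) ^ 2 ≤ T * ε :=
    (div_le_iff₀ hε).1 (hT ▸ Nat.le_ceil _)
  have hgap := le_of_le_mul_of_le_sub_sq
    (e := fun t => trainLoss k d m x y (W t) - trainLoss k d m x y Wstar) (by positivity) hε
    (hSB.loss_sub_le Wstar) (fun t => by linarith [hSB.loss_succ_le hx t]) hTε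
  linarith

/-- **Theorem 2 (sparsity guarantee of ShareBoost).**
If we run ShareBoost for `T = ⌈4 ‖W★‖²_{∞,1} / ε⌉` iterations, then the output matrix `W_T`
has at most `T` nonzero columns and loss at most `L(W★) + ε`. -/
theorem shareBoost_sparsity_guarantee
    (k d m : ℕ) (hk : 2 ≤ k) (hd : 1 ≤ d) (hm : 1 ≤ m)
    (x : Fin m → Fin d → ℝ) (y : Fin m → Fin k)
    (hx : ∀ i : Fin m, ‖x i‖ ≤ 1)
    (F : ℕ → Finset (Fin d)) (W : ℕ → Fin k → Fin d → ℝ) (jj : ℕ → Fin d)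
    (hSB : ShareBoostSeq k d m x y F W jj)
    (ε : ℝ) (hε : 0 < ε)
    (Wstar : Fin k → Fin d → ℝ)
    (T : ℕ) (hT : T = ⌈4 * (∑ r : Fin d, ‖fun q => Wstar q r‖) ^ 2 / ε⌉₊) :
    {r : Fin d | ∃ q, W T q r ≠ 0}.ncard ≤ T ∧
      trainLoss k d m x y (W T) ≤ trainLoss k d m x y Wstar + ε :=
  shareBoost_sparsity_guarantee_general k d m hk x y hx F W jj hSB ε hε Wstar T hT
end
end

section
/- Fix k ≥ 2 and an index j ∈ {1,…,k}, and define ℓ : ℝ^k → ℝ by ℓ(v) = log(1 + Σ_{i∈{1,…,k}∖{j}} exp(1 − v_j + v_i)). Then for all u, v ∈ ℝ^k, ℓ(u + v) ≤ ℓ(u) + ⟨∇ℓ(u), v⟩ + ‖v‖_∞², where ∇ℓ(u) is the gradient of ℓ at u and ‖v‖_∞ = max_i |v_i|. -/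
/-!
Put `c j = 0`, `c i = 1` for `i ≠ j` and `A v = (v i - v j)ᵢ`; then
`ℓ v = logSumExp (c + A v)`. The gradient of `logSumExp` at `x` is the softmax distribution `p` of `x`, and
`logSumExp (x + z) - logSumExp x = log 𝔼_p[exp z]`, which Hoeffding's lemma bounds by
`𝔼_p[z] + (max z - min z)² / 8`. For `z = A v` the range is at most `2 ‖v‖_∞`, so the
error term is even `‖v‖_∞² / 2`.
-/

noncomputable section

open Real Finset

open MeasureTheory ProbabilityTheory in
theorem sum_mul_exp_le_of_mem_Icc {ι : Type*} [Fintype ι] {p z : ι → ℝ} {a b : ℝ}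
    (hp : ∀ i, 0 ≤ p i) (hp1 : ∑ i, p i = 1) (hz : ∀ i, z i ∈ Set.Icc a b) :
    ∑ i, p i * exp (z i) ≤ exp (∑ i, p i * z i + (b - a) ^ 2 / 8) := by
  let _ : MeasurableSpace ι := ⊤
  have _ : DiscreteMeasurableSpace ι := ⟨fun _ => trivial⟩
  let μ : PMF ι := PMF.ofFintype (fun i => ENNReal.ofReal (p i)) (by
    rw [← ENNReal.ofReal_sum_of_nonneg fun i _ => hp i, hp1, ENNReal.ofReal_one])
  have hμ : ∀ i, (μ i).toReal = p i := fun i => ENNReal.toReal_ofReal (hp i)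
  have hoeffding := (hasSubgaussianMGF_of_mem_Icc (μ := μ.toMeasure) (X := z)
    Measurable.of_discrete.aemeasurable (ae_of_all _ hz)).mgf_le 1
  simp only [mgf, PMF.integral_eq_sum, hμ, smul_eq_mul, one_mul, one_pow, mul_one] at hoeffding
  have hvar : ((‖b - a‖₊ / 2) ^ 2 : NNReal) / (2 : ℝ) = (b - a) ^ 2 / 8 := by
    push_cast
    rw [norm_eq_abs, div_pow, sq_abs]
    ring
  have hcenter : ∑ i, p i * exp (z i)
      = exp (∑ i, p i * z i) * ∑ i, p i * exp (z i - ∑ i, p i * z i) := by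
    rw [mul_sum]
    refine sum_congr rfl fun i _ => ?_
    rw [exp_sub]
    field_simp
  rw [hcenter, exp_add, ← hvar]
  gcongr

section LogSumExp

variable {ι : Type*} [Fintype ι]

def logSumExp (x : ι → ℝ) : ℝ := log (∑ i, exp (x i))

def softmax (x : ι → ℝ) (i : ι) : ℝ := exp (x i) / ∑ i, exp (x i)

variable [Nonempty ι]

theorem sum_exp_pos (x : ι → ℝ) : 0 < ∑ i, exp (x i) :=
  sum_pos (fun i _ => exp_pos (x i)) univ_nonempty

theorem softmax_pos (x : ι → ℝ) (i : ι) : 0 < softmax x i :=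
  div_pos (exp_pos _) (sum_exp_pos x)

theorem sum_softmax (x : ι → ℝ) : ∑ i, softmax x i = 1 := by
  simp only [softmax, ← sum_div, div_self (sum_exp_pos x).ne']

theorem hasFDerivAt_logSumExp (x : ι → ℝ) :
    HasFDerivAt logSumExp
      (∑ i, softmax x i • ContinuousLinearMap.proj i : (ι → ℝ) →L[ℝ] ℝ) x := by
  have hsum : HasFDerivAt (fun y : ι → ℝ => ∑ i, exp (y i))
      (∑ i, exp (x i) • ContinuousLinearMap.proj i : (ι → ℝ) →L[ℝ] ℝ) x :=
    HasFDerivAt.fun_sum fun i _ => (hasFDerivAt_apply i x).exp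
  have hlog := hsum.log (sum_exp_pos x).ne'
  rw [smul_sum] at hlog
  simp only [smul_smul, inv_mul_eq_div] at hlog
  exact hlog

theorem logSumExp_add_le (x z : ι → ℝ) {a b : ℝ} (hz : ∀ i, z i ∈ Set.Icc a b) :
    logSumExp (x + z) ≤ logSumExp x + ∑ i, softmax x i * z i + (b - a) ^ 2 / 8 := by
  have hS := sum_exp_pos x
  have hfactor : ∑ i, exp ((x + z) i) = (∑ i, exp (x i)) * ∑ i, softmax x i * exp (z i) := by
    simp only [mul_sum, softmax, Pi.add_apply, exp_add]
    exact sum_congr rfl fun i _ => by field_simp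
  have hhoeffding :=
    sum_mul_exp_le_of_mem_Icc (fun i => (softmax_pos x i).le) (sum_softmax x) hz
  have hpos : 0 < ∑ i, softmax x i * exp (z i) :=
    sum_pos (fun i _ => mul_pos (softmax_pos x i) (exp_pos _)) univ_nonempty
  calc logSumExp (x + z) = logSumExp x + log (∑ i, softmax x i * exp (z i)) := by
        rw [logSumExp, hfactor, log_mul hS.ne' hpos.ne', logSumExp]
    _ ≤ logSumExp x + (∑ i, softmax x i * z i + (b - a) ^ 2 / 8) := by
        gcongr
        exact (log_le_iff_le_exp hpos).mpr hhoeffding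
    _ = _ := by ring

end LogSumExp

theorem one_add_sum_erase_exp_eq_sum_exp {ι : Type*} [Fintype ι] [DecidableEq ι] (j : ι)
    (y : ι → ℝ) :
    1 + ∑ i ∈ univ.erase j, exp (1 - y j + y i)
      = ∑ i, exp ((if i = j then 0 else 1) + (y i - y j)) := by
  rw [← add_sum_erase _ _ (mem_univ j)]
  congr 1
  · simp
  · exact sum_congr rfl fun i hi => by rw [if_neg (ne_of_mem_erase hi)]; ring_nf

theorem softmax_loss_smoothness_general
    (k : ℕ) (j : Fin k)
    (ℓ : (Fin k → ℝ) → ℝ)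
    (hℓ : ∀ v, ℓ v = Real.log (1 + ∑ i ∈ Finset.univ.erase j, Real.exp (1 - v j + v i)))
    (u v : Fin k → ℝ) :
    ℓ (u + v) ≤ ℓ u + fderiv ℝ ℓ u v + ‖v‖ ^ 2 := by
  have : Nonempty (Fin k) := ⟨j⟩
  let c : Fin k → ℝ := fun i => if i = j then 0 else 1
  let A : (Fin k → ℝ) →L[ℝ] (Fin k → ℝ) := .pi fun i => .proj i - .proj j
  have hℓA : ℓ = logSumExp ∘ fun w => c + A w :=
    funext fun w => by rw [hℓ, one_add_sum_erase_exp_eq_sum_exp]; rfl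
  have hderiv : fderiv ℝ ℓ u v = ∑ i, softmax (c + A u) i * A v i := by
    rw [hℓA, ((hasFDerivAt_logSumExp _).comp u (A.hasFDerivAt.const_add c)).fderiv]
    simp
  have hAv : ∀ i, A v i ∈ Set.Icc (-‖v‖ - v j) (‖v‖ - v j) := fun i => by
    have hvi : |v i| ≤ ‖v‖ := by simpa using norm_le_pi_norm v i
    show v i - v j ∈ _
    constructor <;> linarith [abs_le.mp hvi]
  calc ℓ (u + v) = logSumExp (c + A u + A v) := by
        rw [hℓA, Function.comp_apply, map_add, add_assoc]
    _ ≤ logSumExp (c + A u) + ∑ i, softmax (c + A u) i * A v i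
          + (‖v‖ - v j - (-‖v‖ - v j)) ^ 2 / 8 := logSumExp_add_le _ _ hAv
    _ ≤ ℓ u + fderiv ℝ ℓ u v + ‖v‖ ^ 2 := by
        rw [hderiv, hℓA, Function.comp_apply]
        nlinarith [sq_nonneg ‖v‖]

/-- **Lemma 1 (smoothness of the softmax loss).**
For `ℓ(v) = log(1 + ∑_{i ≠ j} exp(1 - v_j + v_i))` one has
`ℓ(u + v) ≤ ℓ(u) + ⟨∇ℓ(u), v⟩ + ‖v‖_∞²`. -/
theorem softmax_loss_smoothness
    (k : ℕ) (hk : 2 ≤ k) (j : Fin k)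
    (ℓ : (Fin k → ℝ) → ℝ)
    (hℓ : ∀ v, ℓ v = Real.log (1 + ∑ i ∈ Finset.univ.erase j, Real.exp (1 - v j + v i)))
    (u v : Fin k → ℝ) :
    ℓ (u + v) ≤ ℓ u + fderiv ℝ ℓ u v + ‖v‖ ^ 2 :=
  softmax_loss_smoothness_general k j ℓ hℓ u v

end
end

section
/- Fix k ≥ 2 and an index j ∈ {1,…,k}, and define ℓ : ℝ^k → ℝ by ℓ(v) = log(1 + Σ_{i∈{1,…,k}∖{j}} exp(1 − v_j + v_i)). Then for every w ∈ ℝ^k, the Hessian matrix H of ℓ at w satisfies vᵀ H v ≤ 2 ‖v‖_∞² for all v ∈ ℝ^k. -/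
/-!
Along the line `t ↦ w + t • v` the loss is `log (1 + ∑ i, exp (c i + t * a i))` with
`a i = v i - v j`, so the quadratic form of the Hessian is the variance of the values `a i`
under the softmax weights, the summand `1` being an extra atom at the value `0`. A variance is
at most the second moment about any point; about `-v j` the values become the coordinates of
`v`, whence the bound `‖v‖ ^ 2`.
-/

open scoped BigOperators

noncomputable section

open Real Finset

theorem mul_sum_sq_sub_sq_sum_le {ι : Type*} {s : Finset ι} {p a : ι → ℝ} {c m M : ℝ}
    (hc : 0 ≤ c) (hp : ∀ i ∈ s, 0 ≤ p i) (hm : m ^ 2 ≤ M) (ha : ∀ i ∈ s, (a i + m) ^ 2 ≤ M) :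
    (c + ∑ i ∈ s, p i) * ∑ i ∈ s, p i * a i ^ 2 - (∑ i ∈ s, p i * a i) ^ 2
      ≤ M * (c + ∑ i ∈ s, p i) ^ 2 := by
  set Z := c + ∑ i ∈ s, p i
  have hZ : 0 ≤ Z := add_nonneg hc (sum_nonneg hp)
  have hshift_sum : ∑ i ∈ s, p i * (a i + m) = ∑ i ∈ s, p i * a i + m * ∑ i ∈ s, p i := by
    rw [mul_sum, ← sum_add_distrib]; exact sum_congr rfl fun i _ => by ring
  have hshift_sq_sum : ∑ i ∈ s, p i * (a i + m) ^ 2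
      = ∑ i ∈ s, p i * a i ^ 2 + 2 * m * ∑ i ∈ s, p i * a i + m ^ 2 * ∑ i ∈ s, p i := by
    simp only [mul_sum, ← sum_add_distrib]; exact sum_congr rfl fun i _ => by ring
  have hshift_sq_le : ∑ i ∈ s, p i * (a i + m) ^ 2 ≤ M * ∑ i ∈ s, p i := by
    rw [mul_sum]; exact sum_le_sum fun i hi => by nlinarith [hp i hi, ha i hi]
  -- Shifting all values by `m` (the atom of mass `c` at `0` moves to `m`) preserves the variance.
  calc Z * ∑ i ∈ s, p i * a i ^ 2 - (∑ i ∈ s, p i * a i) ^ 2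
      = Z * (c * m ^ 2 + ∑ i ∈ s, p i * (a i + m) ^ 2)
          - (c * m + ∑ i ∈ s, p i * (a i + m)) ^ 2 := by rw [hshift_sum, hshift_sq_sum]; ring
    _ ≤ Z * (c * m ^ 2 + ∑ i ∈ s, p i * (a i + m) ^ 2) := sub_le_self _ (sq_nonneg _)
    _ ≤ Z * (c * M + M * ∑ i ∈ s, p i) := by gcongr
    _ = M * Z ^ 2 := by ring

theorem iteratedFDeriv_two_apply_same_eq_deriv_deriv {𝕜 E F : Type*}
    [NontriviallyNormedField 𝕜] [NormedAddCommGroup E] [NormedSpace 𝕜 E]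
    [NormedAddCommGroup F] [NormedSpace 𝕜 F]
    {f : E → F} (hf : ContDiff 𝕜 2 f) (x v : E) :
    iteratedFDeriv 𝕜 2 f x ![v, v] = deriv (deriv fun t : 𝕜 => f (x + t • v)) 0 := by
  have hline : ∀ t : 𝕜, HasDerivAt (fun t : 𝕜 => x + t • v) v t := fun t => by
    simpa using ((hasDerivAt_id t).smul_const v).const_add x
  have hf' : Differentiable 𝕜 (fderiv 𝕜 f) :=
    (hf.fderiv_right (m := 1) le_rfl).differentiable one_ne_zero
  have hdf : deriv (fun t : 𝕜 => f (x + t • v)) = fun t => fderiv 𝕜 f (x + t • v) v :=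
    funext fun t =>
      ((hf.differentiable two_ne_zero _).hasFDerivAt.comp_hasDerivAt t (hline t)).deriv
  have hddf : HasDerivAt (fun t : 𝕜 => fderiv 𝕜 f (x + t • v) v)
      (fderiv 𝕜 (fderiv 𝕜 f) x v v) 0 := by
    simpa using
      ((hf' _).hasFDerivAt.comp_hasDerivAt (0 : 𝕜) (hline 0)).clm_apply (hasDerivAt_const 0 v)
  rw [iteratedFDeriv_two_apply, hdf, hddf.deriv]
  rfl

section LogPartition

variable {ι : Type*} (s : Finset ι) (c a : ι → ℝ)

theorem hasDerivAt_sum_exp_mul_pow (n : ℕ) (t : ℝ) :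
    HasDerivAt (fun t => ∑ i ∈ s, exp (c i + t * a i) * a i ^ n)
      (∑ i ∈ s, exp (c i + t * a i) * a i ^ (n + 1)) t := by
  refine HasDerivAt.fun_sum fun i _ => ?_
  exact (((hasDerivAt_mul_const (a i)).const_add (c i)).exp.mul_const (a i ^ n)).congr_deriv
    (by ring)

theorem hasDerivAt_one_add_sum_exp (t : ℝ) :
    HasDerivAt (fun t => 1 + ∑ i ∈ s, exp (c i + t * a i))
      (∑ i ∈ s, exp (c i + t * a i) * a i) t := by
  simpa using (hasDerivAt_sum_exp_mul_pow s c a 0 t).const_add 1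

theorem one_add_sum_exp_pos (t : ℝ) : 0 < 1 + ∑ i ∈ s, exp (c i + t * a i) := by
  have := sum_nonneg fun i (_ : i ∈ s) => (exp_pos (c i + t * a i)).le
  linarith

theorem deriv_log_one_add_sum_exp :
    deriv (fun t => log (1 + ∑ i ∈ s, exp (c i + t * a i)))
      = fun t => (∑ i ∈ s, exp (c i + t * a i) * a i) / (1 + ∑ i ∈ s, exp (c i + t * a i)) :=
  funext fun t => ((hasDerivAt_one_add_sum_exp s c a t).log (one_add_sum_exp_pos s c a t).ne').deriv

theorem deriv_deriv_log_one_add_sum_exp (t : ℝ) :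
    deriv (deriv fun t => log (1 + ∑ i ∈ s, exp (c i + t * a i))) t
      = ((1 + ∑ i ∈ s, exp (c i + t * a i)) * ∑ i ∈ s, exp (c i + t * a i) * a i ^ 2
          - (∑ i ∈ s, exp (c i + t * a i) * a i) ^ 2) / (1 + ∑ i ∈ s, exp (c i + t * a i)) ^ 2 := by
  have hnum := hasDerivAt_sum_exp_mul_pow s c a 1 t
  simp only [pow_one] at hnum
  rw [deriv_log_one_add_sum_exp,
    (hnum.fun_div (hasDerivAt_one_add_sum_exp s c a t) (one_add_sum_exp_pos s c a t).ne').deriv]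
  ring

end LogPartition

theorem softmax_loss_hessian_bound_general
    (k : ℕ) (j : Fin k)
    (ℓ : (Fin k → ℝ) → ℝ)
    (hℓ : ∀ v, ℓ v = Real.log (1 + ∑ i ∈ Finset.univ.erase j, Real.exp (1 - v j + v i)))
    (w v : Fin k → ℝ) :
    iteratedFDeriv ℝ 2 ℓ w ![v, v] ≤ 2 * ‖v‖ ^ 2 := by
  have hsmooth : ContDiff ℝ 2 ℓ := by
    rw [funext hℓ]
    exact ContDiff.log (by fun_prop) fun x => by positivity
  have hline : (fun t : ℝ => ℓ (w + t • v)) = fun t => log (1 + ∑ i ∈ univ.erase j,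
      exp ((1 - w j + w i) + t * (v i - v j))) := by
    funext t
    rw [hℓ]
    congr 2
    refine sum_congr rfl fun i _ => ?_
    simp only [Pi.add_apply, Pi.smul_apply, smul_eq_mul]
    ring_nf
  have hcoord : ∀ i, v i ^ 2 ≤ ‖v‖ ^ 2 := fun i => by
    simpa [Real.norm_eq_abs, sq_abs] using pow_le_pow_left₀ (norm_nonneg _) (norm_le_pi_norm v i) 2
  rw [iteratedFDeriv_two_apply_same_eq_deriv_deriv hsmooth, hline, deriv_deriv_log_one_add_sum_exp]
  simp only [zero_mul, add_zero]
  rw [div_le_iff₀ (by positivity)]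
  calc _ ≤ ‖v‖ ^ 2 * (1 + ∑ i ∈ univ.erase j, exp (1 - w j + w i)) ^ 2 :=
        mul_sum_sq_sub_sq_sum_le zero_le_one (fun i _ => (exp_pos _).le) (hcoord j)
          fun i _ => by rw [sub_add_cancel]; exact hcoord i
    _ ≤ 2 * ‖v‖ ^ 2 * (1 + ∑ i ∈ univ.erase j, exp (1 - w j + w i)) ^ 2 := by
        gcongr; linarith [sq_nonneg ‖v‖]

/-- **Hessian bound for the softmax loss.**
For `ℓ(v) = log(1 + ∑_{i ≠ j} exp(1 - v_j + v_i))`, the Hessian `H` of `ℓ` at any point `w`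
satisfies `vᵀ H v ≤ 2 ‖v‖_∞²` for all `v`. -/
theorem softmax_loss_hessian_bound
    (k : ℕ) (hk : 2 ≤ k) (j : Fin k)
    (ℓ : (Fin k → ℝ) → ℝ)
    (hℓ : ∀ v, ℓ v = Real.log (1 + ∑ i ∈ Finset.univ.erase j, Real.exp (1 - v j + v i)))
    (w v : Fin k → ℝ) :
    iteratedFDeriv ℝ 2 ℓ w ![v, v] ≤ 2 * ‖v‖ ^ 2 :=
  softmax_loss_hessian_bound_general k j ℓ hℓ w v
end
end

section
/- Let k ≥ 2, d ≥ 1, and let S = ((x_1,y_1),…,(x_m,y_m)) be a training set with each ‖x_i‖_∞ ≤ 1, with training loss L. Then for every W ∈ ℝ^{k×d}, every column index r ∈ {1,…,d}, and every u ∈ ℝ^k, setting U = u e_rᵀ (the matrix whose r-th column is u and all other columns are zero), one has L(W − U) ≤ L(W) − ⟨∇L(W), U⟩ + ‖u‖_∞², where ⟨A,B⟩ = Σ_{q,r} A_{q,r} B_{q,r} is the entrywise (Frobenius) inner product and ∇L(W) is the gradient matrix of L at W. -/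
/-! Per sample the loss is a log-sum-exp of the margins, and replacing `W` by `W - u eᵣᵀ` shifts
the margin of class `y'` by `xᵢᵣ (u_y - u_y')`, a quantity confined to an interval of length
`2 ‖u‖_∞` once the label `y` is fixed. Hoeffding's lemma, applied under the softmax distribution
of the margins, bounds the log-sum-exp after the shift by its value before, plus the mean shift
(the directional derivative), plus `(2 ‖u‖_∞)² / 8 ≤ ‖u‖_∞²`. Averaging over the samples gives
the claim. -/

open scoped BigOperators

noncomputable section

open Real Set MeasureTheory ProbabilityTheory

lemma log_sum_mul_exp_le_of_mem_Icc {ι : Type*} [Fintype ι] {w s : ι → ℝ} {lo hi : ℝ}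
    (hw : ∀ j, 0 ≤ w j) (hw_sum : ∑ j, w j = 1) (hs : ∀ j, s j ∈ Icc lo hi) :
    log (∑ j, w j * exp (s j)) ≤ ∑ j, w j * s j + (hi - lo) ^ 2 / 8 := by
  let _ : MeasurableSpace ι := ⊤
  have hsum : ∑ j, ENNReal.ofReal (w j) = 1 := by
    rw [← ENNReal.ofReal_sum_of_nonneg fun j _ => hw j, hw_sum, ENNReal.ofReal_one]
  set μ := (PMF.ofFintype _ hsum).toMeasure
  have integral_eq (f : ι → ℝ) : ∫ j, f j ∂μ = ∑ j, w j * f j := by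
    simp [μ, PMF.integral_eq_sum, ENNReal.toReal_ofReal (hw _)]
  set M := mgf (fun j => s j - μ[s]) μ 1
  have hM : ∑ j, w j * exp (s j) = exp (∑ j, w j * s j) * M := by
    simp only [M, mgf, integral_eq, one_mul, exp_sub, Finset.mul_sum]
    refine Finset.sum_congr rfl fun j _ => ?_
    field_simp
  have hM_le : M ≤ exp ((hi - lo) ^ 2 / 8) := by
    refine ((hasSubgaussianMGF_of_mem_Icc (measurable_of_countable s).aemeasurable
      (ae_of_all _ hs)).mgf_le 1).trans_eq ?_
    congr 1
    simp only [NNReal.coe_pow, NNReal.coe_div, coe_nnnorm, norm_eq_abs, NNReal.coe_ofNat,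
      one_pow, mul_one, div_pow, sq_abs]
    ring
  have hM_pos : 0 < M := mgf_pos .of_finite
  rw [hM, log_mul (exp_pos _).ne' hM_pos.ne', log_exp]
  gcongr
  exact (log_le_iff_le_exp hM_pos).2 hM_le

def mcMargin (k : ℕ) (y : Fin k) (v : Fin k → ℝ) (y' : Fin k) : ℝ :=
  (if y' ≠ y then (1 : ℝ) else 0) - v y + v y'

lemma mcLoss_eq_log_sum_exp_mcMargin (k : ℕ) (y : Fin k) (v : Fin k → ℝ) :
    mcLoss k y v = log (∑ y', exp (mcMargin k y v y')) := rfl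

lemma mcMargin_add (k : ℕ) (y : Fin k) (v w : Fin k → ℝ) (y' : Fin k) :
    mcMargin k y (v + w) y' = mcMargin k y v y' + (w y' - w y) := by
  simp only [mcMargin, Pi.add_apply]; ring

lemma hasFDerivAt_mcLoss {k : ℕ} (y : Fin k) (v : Fin k → ℝ) :
    HasFDerivAt (mcLoss k y)
      ((∑ y', exp (mcMargin k y v y'))⁻¹ • ∑ y', exp (mcMargin k y v y') •
        (ContinuousLinearMap.proj (R := ℝ) (φ := fun _ : Fin k => ℝ) y' -
          ContinuousLinearMap.proj y)) v := by
  have hpos : 0 < ∑ y', exp (mcMargin k y v y') :=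
    Finset.sum_pos (fun _ _ => exp_pos _) ⟨y, Finset.mem_univ _⟩
  refine HasFDerivAt.log (HasFDerivAt.fun_sum fun y' _ => HasFDerivAt.exp ?_) hpos.ne'
  exact (((hasFDerivAt_const _ v).sub (hasFDerivAt_apply y v)).add
    (hasFDerivAt_apply y' v)).congr_fderiv (by abel)

lemma fderiv_mcLoss_apply {k : ℕ} (y : Fin k) (v w : Fin k → ℝ) :
    fderiv ℝ (mcLoss k y) v w =
      ∑ y', exp (mcMargin k y v y') / (∑ y'', exp (mcMargin k y v y'')) * (w y' - w y) := by
  simp [(hasFDerivAt_mcLoss y v).fderiv, Finset.mul_sum, div_eq_inv_mul, mul_assoc]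

lemma mcLoss_add_le_of_mem_Icc {k : ℕ} (y : Fin k) (v : Fin k → ℝ) {w : Fin k → ℝ} {lo hi : ℝ}
    (hw : ∀ q, w q ∈ Icc lo hi) :
    mcLoss k y (v + w) ≤ mcLoss k y v + fderiv ℝ (mcLoss k y) v w + (hi - lo) ^ 2 / 8 := by
  set Z := ∑ y', exp (mcMargin k y v y')
  have hZ : 0 < Z := Finset.sum_pos (fun _ _ => exp_pos _) ⟨y, Finset.mem_univ _⟩
  have hsoftmax := log_sum_mul_exp_le_of_mem_Icc (w := fun y' => exp (mcMargin k y v y') / Z)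
    (s := fun y' => w y' - w y) (lo := lo - w y) (hi := hi - w y)
    (fun _ => by positivity) (by rw [← Finset.sum_div, div_self hZ.ne'])
    (fun q => ⟨by linarith [(hw q).1], by linarith [(hw q).2]⟩)
  have hsum : ∑ y', exp (mcMargin k y (v + w) y') =
      Z * ∑ y', exp (mcMargin k y v y') / Z * exp (w y' - w y) := by
    simp only [mcMargin_add, exp_add, Finset.mul_sum]
    refine Finset.sum_congr rfl fun y' _ => ?_
    field_simp
  rw [mcLoss_eq_log_sum_exp_mcMargin, hsum, log_mul hZ.ne'
      (Finset.sum_pos (fun _ _ => by positivity) ⟨y, Finset.mem_univ _⟩).ne',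
    mcLoss_eq_log_sum_exp_mcMargin, fderiv_mcLoss_apply]
  rw [sub_sub_sub_cancel_right] at hsoftmax
  linarith

def mulVecLeftCLM (ι : Type*) {κ : Type*} [Fintype ι] [Fintype κ] (x : κ → ℝ) :
    (ι → κ → ℝ) →L[ℝ] (ι → ℝ) :=
  LinearMap.toContinuousLinearMap
    { toFun := fun W q => ∑ j, W q j * x j
      map_add' := fun W V => by ext q; simp [add_mul, Finset.sum_add_distrib]
      map_smul' := fun c W => by ext q; simp [Finset.mul_sum, mul_assoc] }

lemma trainLoss_eq {k d m : ℕ} (x : Fin m → Fin d → ℝ) (y : Fin m → Fin k) :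
    trainLoss k d m x y = fun W => (1 / (m : ℝ)) * ∑ i, mcLoss k (y i) (mulVecLeftCLM _ (x i) W) :=
  rfl

lemma hasFDerivAt_trainLoss {k d m : ℕ} (x : Fin m → Fin d → ℝ) (y : Fin m → Fin k)
    (W : Fin k → Fin d → ℝ) :
    HasFDerivAt (trainLoss k d m x y) ((1 / (m : ℝ)) • ∑ i,
      (fderiv ℝ (mcLoss k (y i)) (mulVecLeftCLM _ (x i) W)).comp (mulVecLeftCLM _ (x i))) W := by
  rw [trainLoss_eq]
  refine HasFDerivAt.const_mul (HasFDerivAt.fun_sum fun i _ => ?_) _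
  exact (hasFDerivAt_mcLoss _ _).differentiableAt.hasFDerivAt.comp W
    (mulVecLeftCLM _ (x i)).hasFDerivAt

lemma trainLoss_add_le_of_mem_Icc {k d m : ℕ} (x : Fin m → Fin d → ℝ) (y : Fin m → Fin k)
    (W : Fin k → Fin d → ℝ) {V : Fin k → Fin d → ℝ} {lo hi : ℝ}
    (hV : ∀ i q, ∑ j, V q j * x i j ∈ Icc lo hi) :
    trainLoss k d m x y (W + V) ≤
      trainLoss k d m x y W + fderiv ℝ (trainLoss k d m x y) W V + (hi - lo) ^ 2 / 8 := by
  have hsample (i : Fin m) := mcLoss_add_le_of_mem_Icc (y i) (mulVecLeftCLM _ (x i) W) (hV i)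
  have hmean : 1 / (m : ℝ) * (m * ((hi - lo) ^ 2 / 8)) ≤ (hi - lo) ^ 2 / 8 := by
    rcases eq_or_ne (m : ℝ) 0 with hm | hm
    · simp [hm]; positivity
    · rw [one_div, inv_mul_cancel_left₀ hm]
  rw [(hasFDerivAt_trainLoss x y W).fderiv, trainLoss_eq]
  simp only [map_add, smul_apply, sum_apply, ContinuousLinearMap.comp_apply, smul_eq_mul]
  calc 1 / (m : ℝ) * ∑ i, mcLoss k (y i) (mulVecLeftCLM _ (x i) W + mulVecLeftCLM _ (x i) V)
      ≤ 1 / (m : ℝ) * ∑ i, (mcLoss k (y i) (mulVecLeftCLM _ (x i) W) +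
          fderiv ℝ (mcLoss k (y i)) (mulVecLeftCLM _ (x i) W) (mulVecLeftCLM _ (x i) V) +
          (hi - lo) ^ 2 / 8) := by gcongr with i; exact hsample i
    _ ≤ _ := by
      simp only [Finset.sum_add_distrib, Finset.sum_const, Finset.card_univ, Fintype.card_fin,
        nsmul_eq_mul]
      linarith

theorem trainLoss_smoothness_column_update_general
    (k d m : ℕ)
    (x : Fin m → Fin d → ℝ) (y : Fin m → Fin k)
    (hx : ∀ i : Fin m, ‖x i‖ ≤ 1)
    (W : Fin k → Fin d → ℝ) (r : Fin d) (u : Fin k → ℝ)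
    (U : Fin k → Fin d → ℝ) (hU : U = fun q j => if j = r then u q else 0) :
    trainLoss k d m x y (fun q j => W q j - U q j) ≤
      trainLoss k d m x y W - fderiv ℝ (trainLoss k d m x y) W U + ‖u‖ ^ 2 := by
  have hcol (i : Fin m) (q : Fin k) : ∑ j, (-U) q j * x i j ∈ Icc (-‖u‖) ‖u‖ := by
    have hxr : |x i r| ≤ 1 := (norm_le_pi_norm (x i) r).trans (hx i)
    have huq : |u q| ≤ ‖u‖ := norm_le_pi_norm u q
    rw [mem_Icc, ← abs_le, hU]
    simp only [Pi.neg_apply, neg_mul, Finset.sum_neg_distrib, abs_neg, ite_mul, zero_mul,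
      Finset.sum_ite_eq', Finset.mem_univ, if_true, abs_mul]
    simpa using mul_le_mul huq hxr (abs_nonneg _) (norm_nonneg u)
  calc trainLoss k d m x y (W + -U)
      ≤ trainLoss k d m x y W + fderiv ℝ (trainLoss k d m x y) W (-U) + (‖u‖ - -‖u‖) ^ 2 / 8 :=
        trainLoss_add_le_of_mem_Icc x y W hcol
    _ ≤ _ := by
      rw [map_neg]
      nlinarith [sq_nonneg ‖u‖]

/-- **Lemma 2 (smoothness of the training loss for rank-one column updates).**
For `U = u eᵣᵀ`, `L(W - U) ≤ L(W) - ⟨∇L(W), U⟩ + ‖u‖_∞²`. -/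
theorem trainLoss_smoothness_column_update
    (k d m : ℕ) (hk : 2 ≤ k) (hd : 1 ≤ d) (hm : 1 ≤ m)
    (x : Fin m → Fin d → ℝ) (y : Fin m → Fin k)
    (hx : ∀ i : Fin m, ‖x i‖ ≤ 1)
    (W : Fin k → Fin d → ℝ) (r : Fin d) (u : Fin k → ℝ)
    (U : Fin k → Fin d → ℝ) (hU : U = fun q j => if j = r then u q else 0) :
    trainLoss k d m x y (fun q j => W q j - U q j) ≤
      trainLoss k d m x y W - fderiv ℝ (trainLoss k d m x y) W U + ‖u‖ ^ 2 :=
  trainLoss_smoothness_column_update_general k d m x y hx W r u U hU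
end
end

section
/- Let B > 0 and let (ε_t)_{t≥0} be a sequence of real numbers satisfying ε_{t+1} ≤ ε_t − ε_t²/(4B²) for every t ≥ 0. Then for every ε > 0 and every integer t ≥ 4B²/ε, one has ε_t ≤ ε. -/
/-- **Convergence lemma (Lemma B.2 of Shalev-Shwartz, Srebro & Zhang).**
If `ε_{t+1} ≤ ε_t - ε_t²/(4B²)` for all `t`, then `ε_t ≤ ε` whenever `t ≥ 4B²/ε`. -/
theorem recurrence_convergence_lemma
    (B : ℝ) (hB : 0 < B) (e : ℕ → ℝ)
    (hrec : ∀ t : ℕ, e (t + 1) ≤ e t - (e t) ^ 2 / (4 * B ^ 2))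
    (ε : ℝ) (hε : 0 < ε) (t : ℕ) (ht : 4 * B ^ 2 / ε ≤ (t : ℝ)) :
    e t ≤ ε := by
  set C : ℝ := 4 * B ^ 2 with hCdef
  have hC : 0 < C := by positivity
  -- multiplied form of the recurrence
  have hrec' : ∀ n : ℕ, C * e (n + 1) ≤ C * e n - (e n) ^ 2 := by
    intro n
    have h2 : (e n) ^ 2 / C * C = (e n) ^ 2 := div_mul_cancel₀ _ (ne_of_gt hC)
    nlinarith [mul_le_mul_of_nonneg_right (hrec n) hC.le]
  have key : ∀ n : ℕ, 1 ≤ n → (n : ℝ) * e n ≤ C := by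
    intro n hn
    induction n with
    | zero => omega
    | succ m ih =>
      rcases Nat.lt_or_ge m 1 with hm | hm
      · interval_cases m
        have h := hrec' 0
        push_cast
        nlinarith [sq_nonneg (2 * e 0 - C)]
      · have ihm := ih hm
        have hmr : (1 : ℝ) ≤ (m : ℝ) := by exact_mod_cast hm
        have h := hrec' m
        push_cast
        push_cast at ihm
        rcases le_or_gt (e m) 0 with h0 | h0
        · nlinarith [sq_nonneg (e m)]
        · nlinarith [sq_nonneg (2 * e m - C), sq_nonneg ((m : ℝ) * e m - C),
            mul_nonneg (mul_nonneg (by linarith : (0:ℝ) ≤ (m:ℝ) - 1)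
              (by linarith : (0:ℝ) ≤ C - (m:ℝ) * e m)) h0.le,
            mul_nonneg (by linarith : (0:ℝ) ≤ C - (m:ℝ) * e m) h0.le,
            mul_pos hC h0]
  have ht1 : 1 ≤ t := by
    by_contra h
    push_neg at h
    interval_cases t
    simp at ht
    have : 0 < C / ε := by positivity
    linarith
  have htpos : (0 : ℝ) < (t : ℝ) := by exact_mod_cast Nat.pos_of_ne_zero (by omega)
  have hCt : C ≤ (t : ℝ) * ε := by
    rw [div_le_iff₀ hε] at ht
    linarith
  have := key t ht1
  nlinarith
end
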